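/- arXiv:cs/0208033 — 3 statements merged into one kernel-verified Lean document; each statement's English description precedes it below -/
import Mathlib

section
/- Every instance of the axiom scheme KT3, namely K_iφ₁ ∧ ○(K_iφ₂ ∧ ¬K_iφ₃) ⇒ L_i((K_iφ₁) U ((K_iφ₂) U ¬φ₃)) for i = 1,...,m, is valid with respect to C_m^{pr}, the class of interpreted systems for m agents in which every agent has perfect recall. -/
namespace HalpernVardiMeyden

open scoped Classical

/-- A global state for `m` agents: an environment state together with a
local state for each agent. -/
abbrev GRun (L : Type) (m : ℕ) : Type := ℕ → L × (Fin m → L)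

/-- The points `(r,n)` and `(r',n')` are indistinguishable to agent `i`. -/
def locEq {L : Type} {m : ℕ} (i : Fin m) (r : GRun L m) (n : ℕ)
    (r' : GRun L m) (n' : ℕ) : Prop :=
  (r n).2 i = (r' n').2 i

/-- The system `R` is synchronous. -/
def SyncSys {L : Type} {m : ℕ} (R : Set (GRun L m)) : Prop :=
  ∀ i : Fin m, ∀ r ∈ R, ∀ r' ∈ R, ∀ n n' : ℕ, locEq i r n r' n' → n = n'

/-- The system `R` has a unique initial state. -/
def UISSys {L : Type} {m : ℕ} (R : Set (GRun L m)) : Prop :=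
  ∀ r ∈ R, ∀ r' ∈ R, r 0 = r' 0

/-- Omit consecutive repetitions from a list. -/
noncomputable def dedup {L : Type} : List L → List L
  | [] => []
  | [a] => [a]
  | a :: b :: l => if a = b then dedup (b :: l) else a :: dedup (b :: l)

/-- Agent `i`'s local-state sequence at the point `(r,n)`: the sequence of local states
of agent `i` in `r 0, …, r n`, with consecutive repetitions omitted. -/
noncomputable def lsSeq {L : Type} {m : ℕ} (i : Fin m) (r : GRun L m) (n : ℕ) : List L :=
  dedup ((List.range (n + 1)).map fun k => (r k).2 i)

/-- Agent `i` has perfect recall in the system `R`. -/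
def PerfectRecallSys {L : Type} {m : ℕ} (R : Set (GRun L m)) (i : Fin m) : Prop :=
  ∀ r ∈ R, ∀ r' ∈ R, ∀ n n' : ℕ, locEq i r n r' n' → lsSeq i r n = lsSeq i r' n'

/-- `futureIdx i r n j` is the index (time) of the `j`-th entry of agent `i`'s
future local-state sequence at `(r,n)` (where consecutive repetitions are omitted),
if this sequence has a `j`-th entry. -/
noncomputable def futureIdx {L : Type} {m : ℕ} (i : Fin m) (r : GRun L m) (n : ℕ) :
    ℕ → Option ℕ
  | 0 => some n
  | j + 1 => (futureIdx i r n j).bind fun t =>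
      if h : ∃ k, t < k ∧ (r k).2 i ≠ (r t).2 i then some (Nat.find h) else none

/-- Agent `i`'s future local-state sequence at `(r,n)`: the (possibly finite) sequence of
local states of agent `i` in `r n, r (n+1), …`, with consecutive repetitions omitted,
represented as a function `ℕ → Option L`. -/
noncomputable def futureSeq {L : Type} {m : ℕ} (i : Fin m) (r : GRun L m) (n : ℕ)
    (j : ℕ) : Option L :=
  (futureIdx i r n j).map fun t => (r t).2 i

/-- Agent `i` does not learn in the system `R`. -/
def NoLearningSys {L : Type} {m : ℕ} (R : Set (GRun L m)) (i : Fin m) : Prop :=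
  ∀ r ∈ R, ∀ r' ∈ R, ∀ n n' : ℕ, locEq i r n r' n' →
    ∀ j : ℕ, futureSeq i r n j = futureSeq i r' n' j


/-- An interpreted system for `m` agents: a type of local states, a set of runs, and a
valuation assigning a truth value to each primitive proposition at each point. -/
structure IntSystem (m : ℕ) where
  L : Type
  runs : Set (GRun L m)
  val : GRun L m → ℕ → ℕ → Prop

namespace IntSystem

variable {m : ℕ}

/-- The interpreted system `I` is synchronous. -/
def Sync (I : IntSystem m) : Prop := SyncSys I.runs

/-- The interpreted system `I` has a unique initial state. -/
def UIS (I : IntSystem m) : Prop := UISSys I.runs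

/-- Agent `i` has perfect recall in the interpreted system `I`. -/
def PerfectRecall (I : IntSystem m) (i : Fin m) : Prop := PerfectRecallSys I.runs i

/-- Agent `i` does not learn in the interpreted system `I`. -/
def NoLearning (I : IntSystem m) (i : Fin m) : Prop := NoLearningSys I.runs i

end IntSystem

/-- Formulas of the language `KL_m`: primitive propositions, negation, conjunction,
knowledge modalities `K_i`, next `○`, and until `U`. -/
inductive KL (m : ℕ) : Type
  | prim : ℕ → KL m
  | neg : KL m → KL m
  | conj : KL m → KL m → KL m
  | know : Fin m → KL m → KL m
  | next : KL m → KL m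
  | untl : KL m → KL m → KL m

namespace KL

/-- Material implication, as an abbreviation: `φ ⇒ ψ := ¬(φ ∧ ¬ψ)`. -/
def imp {m : ℕ} (φ ψ : KL m) : KL m := neg (conj φ (neg ψ))

/-- Disjunction, as an abbreviation: `φ ∨ ψ := ¬(¬φ ∧ ¬ψ)`. -/
def disj {m : ℕ} (φ ψ : KL m) : KL m := neg (conj (neg φ) (neg ψ))

/-- Biimplication, as an abbreviation. -/
def biimp {m : ℕ} (φ ψ : KL m) : KL m := conj (imp φ ψ) (imp ψ φ)

/-- `L_i φ` abbreviates `¬ K_i ¬ φ`. -/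
def poss {m : ℕ} (i : Fin m) (φ : KL m) : KL m := neg (know i (neg φ))

/-- `true` abbreviates `¬(p ∧ ¬p)` for a fixed primitive proposition `p`. -/
def tru {m : ℕ} : KL m := neg (conj (prim 0) (neg (prim 0)))

/-- `◇φ` abbreviates `true U φ`. -/
def diam {m : ℕ} (φ : KL m) : KL m := untl tru φ

/-- `□φ` abbreviates `¬◇¬φ`. -/
def box {m : ℕ} (φ : KL m) : KL m := neg (diam (neg φ))

/-- A formula of `KL_m` is a propositional tautology if it evaluates to `true` under
every Boolean valuation of formulas that respects negation and conjunction
(treating primitive propositions and formulas whose outermost operator is a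
modality as atoms). -/
def IsTautology {m : ℕ} (φ : KL m) : Prop :=
  ∀ v : KL m → Bool,
    (∀ ψ : KL m, v (neg ψ) = !v ψ) →
    (∀ ψ χ : KL m, v (conj ψ χ) = (v ψ && v χ)) →
    v φ = true

end KL

/-- Provability in the proof system obtained from `S5^U_m` (axioms K1–K5, T1–T3 and rules
R1, R2, RT1, RT2) by adding every formula satisfying `Ax` as an extra axiom. -/
inductive Prov {m : ℕ} (Ax : KL m → Prop) : KL m → Prop
  | extra {φ : KL m} : Ax φ → Prov Ax φ
  | K1 {φ : KL m} : φ.IsTautology → Prov Ax φ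
  | K2 (i : Fin m) (φ ψ : KL m) :
      Prov Ax (((KL.know i φ).conj (KL.know i (φ.imp ψ))).imp (KL.know i ψ))
  | K3 (i : Fin m) (φ : KL m) : Prov Ax ((KL.know i φ).imp φ)
  | K4 (i : Fin m) (φ : KL m) :
      Prov Ax ((KL.know i φ).imp (KL.know i (KL.know i φ)))
  | K5 (i : Fin m) (φ : KL m) :
      Prov Ax ((KL.neg (KL.know i φ)).imp (KL.know i (KL.neg (KL.know i φ))))
  | T1 (φ ψ : KL m) :
      Prov Ax (((KL.next φ).conj (KL.next (φ.imp ψ))).imp (KL.next ψ))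
  | T2 (φ : KL m) : Prov Ax ((KL.next (KL.neg φ)).imp (KL.neg (KL.next φ)))
  | T3 (φ ψ : KL m) :
      Prov Ax ((φ.untl ψ).biimp (ψ.disj (φ.conj (KL.next (φ.untl ψ)))))
  | R1 {φ ψ : KL m} : Prov Ax φ → Prov Ax (φ.imp ψ) → Prov Ax ψ
  | R2 (i : Fin m) {φ : KL m} : Prov Ax φ → Prov Ax (KL.know i φ)
  | RT1 {φ : KL m} : Prov Ax φ → Prov Ax (KL.next φ)
  | RT2 {φ' φ ψ : KL m} :
      Prov Ax (φ'.imp ((KL.neg ψ).conj (KL.next φ'))) →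
      Prov Ax (φ'.imp (KL.neg (φ.untl ψ)))

/-- The empty set of extra axioms: `Prov NoAx` is provability in `S5^U_m` itself. -/
def NoAx {m : ℕ} : KL m → Prop := fun _ => False

/-- Instances of the axiom scheme KT2: `K_i ○φ ⇒ ○ K_i φ`. -/
def KT2Ax {m : ℕ} (χ : KL m) : Prop :=
  ∃ (i : Fin m) (φ : KL m),
    χ = (KL.know i (KL.next φ)).imp (KL.next (KL.know i φ))

/-- Instances of the axiom scheme KT3:
`K_iφ₁ ∧ ○(K_iφ₂ ∧ ¬K_iφ₃) ⇒ L_i((K_iφ₁) U ((K_iφ₂) U ¬φ₃))`. -/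
def KT3Ax {m : ℕ} (χ : KL m) : Prop :=
  ∃ (i : Fin m) (φ₁ φ₂ φ₃ : KL m),
    χ = ((KL.know i φ₁).conj
          (KL.next ((KL.know i φ₂).conj (KL.neg (KL.know i φ₃))))).imp
        (KL.poss i ((KL.know i φ₁).untl ((KL.know i φ₂).untl (KL.neg φ₃))))

/-- Instances of the axiom scheme KT4: `(K_iφ) U (K_iψ) ⇒ K_i((K_iφ) U (K_iψ))`. -/
def KT4Ax {m : ℕ} (χ : KL m) : Prop :=
  ∃ (i : Fin m) (φ ψ : KL m),
    χ = ((KL.know i φ).untl (KL.know i ψ)).imp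
          (KL.know i ((KL.know i φ).untl (KL.know i ψ)))

/-- Instances of the axiom scheme KT5: `○ K_i φ ⇒ K_i ○φ`. -/
def KT5Ax {m : ℕ} (χ : KL m) : Prop :=
  ∃ (i : Fin m) (φ : KL m),
    χ = (KL.next (KL.know i φ)).imp (KL.know i (KL.next φ))

/-- Satisfaction of a `KL_m` formula at a point `(r,n)` of an interpreted system. -/
def IntSystem.sat {m : ℕ} (I : IntSystem m) : KL m → GRun I.L m → ℕ → Prop
  | .prim p, r, n => I.val r n p
  | .neg φ, r, n => ¬ I.sat φ r n
  | .conj φ ψ, r, n => I.sat φ r n ∧ I.sat ψ r n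
  | .know i φ, r, n => ∀ r' ∈ I.runs, ∀ n' : ℕ, locEq i r n r' n' → I.sat φ r' n'
  | .next φ, r, n => I.sat φ r (n + 1)
  | .untl φ ψ, r, n =>
      ∃ n' : ℕ, n ≤ n' ∧ I.sat ψ r n' ∧ ∀ k : ℕ, n ≤ k → k < n' → I.sat φ r k

/-- A `KL_m` formula is valid with respect to a class `C` of interpreted systems if it is
satisfied at every point of every system in `C`. -/
def valid {m : ℕ} (C : Set (IntSystem m)) (φ : KL m) : Prop :=
  ∀ I ∈ C, ∀ r ∈ I.runs, ∀ n : ℕ, I.sat φ r n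

/-- A `KL_m` formula is satisfiable with respect to a class `C` of interpreted systems
if it is satisfied at some point of some system in `C`. -/
def satisfiable {m : ℕ} (C : Set (IntSystem m)) (φ : KL m) : Prop :=
  ∃ I ∈ C, ∃ r ∈ I.runs, ∃ n : ℕ, I.sat φ r n

/-! ### Auxiliary lemmas for KT3 -/

lemma dedup_concat {L : Type} : ∀ (l : List L) (a : L), l ≠ [] →
    dedup (l ++ [a]) = if l.getLast? = some a then dedup l else dedup l ++ [a] := by
  intro l
  induction l with
  | nil => intro a h; exact absurd rfl h
  | cons x l ih =>
    intro a _
    cases l with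
    | nil =>
      by_cases hxa : x = a <;> simp [dedup, hxa]
    | cons y l' =>
      have ih' := ih a (List.cons_ne_nil _ _)
      have hgl : (x :: y :: l').getLast? = (y :: l').getLast? :=
        List.getLast?_cons_cons
      by_cases hxy : x = y <;>
        by_cases hla : (y :: l').getLast? = some a <;>
          simp_all [dedup, List.cons_append]

lemma lsSeq_zero {L : Type} {m : ℕ} (i : Fin m) (r : GRun L m) :
    lsSeq i r 0 = [(r 0).2 i] := by
  simp [lsSeq, List.range_succ, dedup]

lemma lsSeq_succ {L : Type} {m : ℕ} (i : Fin m) (r : GRun L m) (n : ℕ) :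
    lsSeq i r (n + 1) =
      if (r (n + 1)).2 i = (r n).2 i then lsSeq i r n
      else lsSeq i r n ++ [(r (n + 1)).2 i] := by
  have h1 : (List.range (n + 2)).map (fun k => (r k).2 i) =
      ((List.range (n + 1)).map fun k => (r k).2 i) ++ [(r (n + 1)).2 i] := by
    rw [List.range_succ, List.map_append]; simp
  have h2 : ((List.range (n + 1)).map fun k => (r k).2 i).getLast? = some ((r n).2 i) := by
    rw [List.range_succ, List.map_append]; simp
  have hne : ((List.range (n + 1)).map fun k => (r k).2 i) ≠ [] := by
    simp [List.range_succ]
  unfold lsSeq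
  rw [h1, dedup_concat _ _ hne, h2]
  rcases eq_or_ne ((r (n + 1)).2 i) ((r n).2 i) with h | h
  · simp [h]
  · rw [if_neg (by simpa using h.symm), if_neg h]

lemma lsSeq_getLast? {L : Type} {m : ℕ} (i : Fin m) (r : GRun L m) (n : ℕ) :
    (lsSeq i r n).getLast? = some ((r n).2 i) := by
  induction n with
  | zero => simp [lsSeq_zero]
  | succ n ih =>
    rw [lsSeq_succ]
    by_cases h : (r (n + 1)).2 i = (r n).2 i
    · simp [h, ih]
    · simp [h]

lemma lsSeq_extract {L : Type} {m : ℕ} (i : Fin m) (r : GRun L m) :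
    ∀ (n' : ℕ) (M : List L) (a : L), lsSeq i r n' = M ++ [a] → M ≠ [] →
      ∃ t ≤ n', lsSeq i r t = M ∧ ∀ k, t < k → k ≤ n' → (r k).2 i = a := by
  intro n'
  induction n' with
  | zero =>
    intro M a hMa hM
    rw [lsSeq_zero] at hMa
    have : M = [] := by
      cases M with
      | nil => rfl
      | cons x M' =>
        have := congrArg List.length hMa
        simp at this
    exact absurd this hM
  | succ n' ih =>
    intro M a hMa hM
    rw [lsSeq_succ] at hMa
    by_cases h : (r (n' + 1)).2 i = (r n').2 i
    · rw [if_pos h] at hMa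
      obtain ⟨t, ht, hMt, hk⟩ := ih M a hMa hM
      have htn' : t < n' := by
        rcases Nat.lt_or_ge t n' with h' | h'
        · exact h'
        · exfalso
          have : t = n' := le_antisymm ht h'
          rw [this] at hMt
          rw [hMt] at hMa
          have := congrArg List.length hMa
          simp at this
      refine ⟨t, by omega, hMt, fun k hk1 hk2 => ?_⟩
      rcases Nat.lt_or_ge k (n' + 1) with h' | h'
      · exact hk k hk1 (by omega)
      · have hkn : k = n' + 1 := by omega
        rw [hkn, h]
        exact hk n' htn' le_rfl
    · rw [if_neg h] at hMa
      have hMeq : lsSeq i r n' = M ∧ (r (n' + 1)).2 i = a := by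
        have := List.append_inj' hMa rfl
        exact ⟨this.1, by simpa using this.2⟩
      exact ⟨n', by omega, hMeq.1, fun k hk1 hk2 => by
        have : k = n' + 1 := by omega
        rw [this]; exact hMeq.2⟩

lemma lsSeq_ne_nil {L : Type} {m : ℕ} (i : Fin m) (r : GRun L m) (n : ℕ) :
    lsSeq i r n ≠ [] := by
  intro h
  have := lsSeq_getLast? i r n
  rw [h] at this
  simp at this

lemma know_transfer {m : ℕ} (I : IntSystem m) (i : Fin m) (φ : KL m)
    {r : GRun I.L m} {n : ℕ} {r' : GRun I.L m} {n' : ℕ}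
    (hK : I.sat (KL.know i φ) r n) (h : locEq i r n r' n') :
    I.sat (KL.know i φ) r' n' := by
  intro r₃ hr₃ n₃ h₃
  exact hK r₃ hr₃ n₃ (h.trans h₃)

/-- **Lemma 5.1.** Every instance of the axiom scheme KT3 is valid with respect to
`C_m^{pr}`, the class of interpreted systems in which every agent has perfect recall. -/
theorem KT3_valid_pr (m : ℕ) (χ : KL m) (h : KT3Ax χ) :
    valid {I : IntSystem m | ∀ i, I.PerfectRecall i} χ := by
  obtain ⟨i, φ₁, φ₂, φ₃, rfl⟩ := h
  intro I hI r hr n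
  have hpr : I.PerfectRecall i := hI i
  -- unfold the implication
  simp only [KL.imp, KL.poss, IntSystem.sat, not_and, not_not, not_forall, not_exists] at *
  rintro ⟨hK1, hK2, r', hr', n', hloc, hnφ₃⟩
  by_cases hs : (r (n + 1)).2 i = (r n).2 i
  · -- no change in local state: (r', n') is already indistinguishable from (r, n)
    have hloc' : locEq i r n r' n' := by
      unfold locEq at *
      rw [← hs]; exact hloc
    exact ⟨r', hr', n', hloc', n', le_rfl,
      ⟨n', le_rfl, hnφ₃, fun k h1 h2 => absurd h2 (by omega)⟩,
      fun k h1 h2 => absurd h2 (by omega)⟩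
  · -- local state changed at time n+1: use perfect recall
    have hls : lsSeq i r' n' = lsSeq i r n ++ [(r (n + 1)).2 i] := by
      have := hpr r hr r' hr' (n + 1) n' hloc
      rw [← this, lsSeq_succ, if_neg hs]
    obtain ⟨t, htn', hMt, hk⟩ :=
      lsSeq_extract i r' n' (lsSeq i r n) ((r (n + 1)).2 i) hls (lsSeq_ne_nil i r n)
    have hloct : locEq i r n r' t := by
      have h1 := lsSeq_getLast? i r' t
      have h2 := lsSeq_getLast? i r n
      rw [hMt, h2] at h1
      show (r n).2 i = (r' t).2 i
      exact Option.some_inj.mp h1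
    have htlt : t < n' := by
      rcases Nat.lt_or_ge t n' with h' | h'
      · exact h'
      · exfalso
        have ht' : t = n' := le_antisymm htn' h'
        have hx : (r' n').2 i = (r n).2 i := by rw [← ht']; exact hloct.symm
        exact hs ((hloc : (r (n+1)).2 i = (r' n').2 i).trans hx)
    refine ⟨r', hr', t, hloct, t + 1, by omega,
      ⟨n', by omega, hnφ₃, fun k h1 h2 => ?_⟩,
      fun k h1 h2 => ?_⟩
    · -- K_i φ₂ holds at (r', k) for t + 1 ≤ k < n'
      have hlk : (r' k).2 i = (r (n + 1)).2 i := hk k (by omega) (by omega)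
      exact know_transfer I i φ₂ hK2 hlk.symm
    · -- K_i φ₁ holds at (r', k) for t ≤ k < t + 1, i.e. k = t
      have hkt : k = t := by omega
      subst hkt
      exact know_transfer I i φ₁ hK1 hloct

end HalpernVardiMeyden
end

section
/- Every instance of the axiom scheme KT4, namely (K_iφ) U (K_iψ) ⇒ K_i((K_iφ) U (K_iψ)) for i = 1,...,m, is valid with respect to C_m^{nl}, the class of interpreted systems for m agents in which no agent learns. -/
namespace HalpernVardiMeyden

open scoped Classical

section Aux

variable {L : Type} {mm : ℕ}

lemma futureIdx_succ_elim {i : Fin mm} {r : GRun L mm} {n j t : ℕ}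
    (h : futureIdx i r n (j + 1) = some t) :
    ∃ u, futureIdx i r n j = some u ∧ u < t := by
  simp only [futureIdx] at h
  obtain ⟨u, hu, h2⟩ := Option.bind_eq_some_iff.mp h
  refine ⟨u, hu, ?_⟩
  split at h2
  · rename_i hex
    obtain rfl := Option.some_injective _ h2
    exact (Nat.find_spec hex).1
  · simp at h2

lemma futureIdx_ge {i : Fin mm} {r : GRun L mm} {n : ℕ} :
    ∀ {j t : ℕ}, futureIdx i r n j = some t → n ≤ t := by
  intro j
  induction j with
  | zero => intro t h; simp only [futureIdx, Option.some_inj] at h; omega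
  | succ j ih =>
    intro t h
    obtain ⟨u, hu, hlt⟩ := futureIdx_succ_elim h
    exact le_of_lt (lt_of_le_of_lt (ih hu) hlt)

lemma futureIdx_mono {i : Fin mm} {r : GRun L mm} {n : ℕ} :
    ∀ {j j' t t' : ℕ}, j ≤ j' → futureIdx i r n j = some t →
      futureIdx i r n j' = some t' → t ≤ t' := by
  intro j j'
  induction j' with
  | zero =>
    intro t t' hle h h'
    have : j = 0 := Nat.le_zero.mp hle
    subst this
    rw [h] at h'
    exact le_of_eq (Option.some_inj.mp h')
  | succ j' ih =>
    intro t t' hle h h'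
    rcases eq_or_lt_of_le hle with heq | hlt
    · subst heq
      rw [h] at h'
      exact le_of_eq (Option.some_inj.mp h')
    · obtain ⟨u, hu, hult⟩ := futureIdx_succ_elim h'
      exact le_of_lt (lt_of_le_of_lt (ih (Nat.lt_succ_iff.mp hlt) h hu) hult)

lemma futureIdx_strict_mono {i : Fin mm} {r : GRun L mm} {n j j' t t' : ℕ}
    (hlt : j < j') (h : futureIdx i r n j = some t)
    (h' : futureIdx i r n j' = some t') : t < t' := by
  obtain ⟨j'', rfl⟩ : ∃ j'', j' = j'' + 1 := ⟨j' - 1, by omega⟩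
  obtain ⟨u, hu, hult⟩ := futureIdx_succ_elim h'
  exact lt_of_le_of_lt (futureIdx_mono (by omega) h hu) hult

lemma exists_idx (i : Fin mm) (r : GRun L mm) (n : ℕ) :
    ∀ k, n ≤ k → ∃ j t, futureIdx i r n j = some t ∧ t ≤ k ∧
      ∀ l, t ≤ l → l ≤ k → (r l).2 i = (r t).2 i := by
  intro k hk
  induction k, hk using Nat.le_induction with
  | base =>
    exact ⟨0, n, rfl, le_refl n, fun l h1 h2 => by
      have : l = n := le_antisymm h2 h1; rw [this]⟩
  | succ k hk ih =>
    obtain ⟨j, t, hjt, htk, hconst⟩ := ih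
    by_cases hst : (r (k + 1)).2 i = (r t).2 i
    · refine ⟨j, t, hjt, by omega, fun l h1 h2 => ?_⟩
      rcases eq_or_lt_of_le h2 with hl | hl
      · rw [hl]; exact hst
      · exact hconst l h1 (Nat.lt_succ_iff.mp hl)
    · have hex : ∃ k', t < k' ∧ (r k').2 i ≠ (r t).2 i := ⟨k + 1, by omega, hst⟩
      have hfind : Nat.find hex = k + 1 := by
        have h1 : Nat.find hex ≤ k + 1 := Nat.find_le ⟨by omega, hst⟩
        have h2 := Nat.find_spec hex
        by_contra hne
        exact h2.2 (hconst _ (le_of_lt h2.1) (by omega))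
      refine ⟨j + 1, k + 1, ?_, le_refl _, fun l h1 h2 => by
        have : l = k + 1 := le_antisymm h2 h1; rw [this]⟩
      simp only [futureIdx, hjt, Option.bind_some]
      rw [dif_pos hex, hfind]

lemma transfer {i : Fin mm} {r r' : GRun L mm} {n n' : ℕ}
    (hseq : ∀ j, futureSeq i r n j = futureSeq i r' n' j) {j t : ℕ}
    (h : futureIdx i r n j = some t) :
    ∃ t', futureIdx i r' n' j = some t' ∧ (r' t').2 i = (r t).2 i := by
  have hj := hseq j
  rw [futureSeq, futureSeq, h] at hj
  simp only [Option.map_some] at hj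
  obtain ⟨t', ht', heq⟩ := Option.map_eq_some_iff.mp hj.symm
  exact ⟨t', ht', heq⟩

end Aux

/-- **Lemma 5.8.** Every instance of the axiom scheme KT4 is valid with respect to
`C_m^{nl}`, the class of interpreted systems in which no agent learns. -/
theorem KT4_valid_nl (m : ℕ) (χ : KL m) (h : KT4Ax χ) :
    valid {I : IntSystem m | ∀ i, I.NoLearning i} χ := by
  obtain ⟨i, φ, ψ, rfl⟩ := h
  intro I hI r hr n
  simp only [KL.imp, IntSystem.sat, not_and, not_not]
  intro hA
  -- hA : until holds at (r, n); goal: know of until at (r, n)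
  intro r' hr' n' hleq
  have hseq : ∀ j, futureSeq i r n j = futureSeq i r' n' j :=
    hI i r hr r' hr' n n' hleq
  obtain ⟨n₁, hn₁, hψ, hφ⟩ := hA
  obtain ⟨j₁, t₁, hj₁, ht₁k, hconst₁⟩ := exists_idx i r n n₁ hn₁
  obtain ⟨t₁', hj₁', hst₁⟩ := transfer hseq hj₁
  refine ⟨t₁', futureIdx_ge hj₁', ?_, ?_⟩
  · -- K_i ψ at (r', t₁')
    intro r'' hr'' n'' heq''
    apply hψ r'' hr'' n''
    show (r n₁).2 i = (r'' n'').2 i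
    rw [hconst₁ n₁ ht₁k (le_refl n₁), ← hst₁]
    exact heq''
  · -- K_i φ at each (r', k'), n' ≤ k' < t₁'
    intro k' hk'1 hk'2
    obtain ⟨j, t', hj, ht'k, hconst'⟩ := exists_idx i r' n' k' hk'1
    have hjlt : j < j₁ := by
      by_contra hle
      have := futureIdx_mono (by omega) hj₁' hj
      omega
    obtain ⟨s, hs, hsts⟩ := transfer (fun j => (hseq j).symm) hj
    have hslt : s < t₁ := futureIdx_strict_mono hjlt hs hj₁
    have hKφ := hφ s (futureIdx_ge hs) (lt_of_lt_of_le hslt ht₁k)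
    intro r'' hr'' n'' heq''
    apply hKφ r'' hr'' n''
    show (r s).2 i = (r'' n'').2 i
    rw [hsts, ← hconst' k' ht'k (le_refl k')]
    exact heq''

end HalpernVardiMeyden
end

section
/- A formula ψ of the single-agent language KL_1 is satisfiable with respect to C_1^{nl,pr} if and only if it is satisfiable with respect to C_1^{nl,pr,uis}; likewise, ψ is satisfiable with respect to C_1^{nl,pr,sync} if and only if it is satisfiable with respect to C_1^{nl,pr,sync,uis}. -/
namespace HalpernVardiMeyden

open scoped Classical

section Aux

variable {L L' : Type} {m : ℕ}

theorem dedup_map (f : L → L') (hf : Function.Injective f) :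
    ∀ l : List L, dedup (l.map f) = (dedup l).map f
  | [] => rfl
  | [a] => rfl
  | a :: b :: l => by
    rw [List.map_cons, List.map_cons, dedup, dedup]
    by_cases h : a = b
    · rw [if_pos h, if_pos (congrArg f h), ← List.map_cons, dedup_map f hf (b :: l)]
    · rw [if_neg h, if_neg (fun hc => h (hf hc)), ← List.map_cons,
        dedup_map f hf (b :: l), List.map_cons]

theorem dedup_head : ∀ l : List L, (dedup l).head? = l.head?
  | [] => rfl
  | [a] => rfl
  | a :: b :: l => by
    rw [dedup]
    by_cases h : a = b
    · rw [if_pos h, dedup_head (b :: l)]; simp [h]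
    · rw [if_neg h]; rfl

theorem dedup_none_cons : ∀ l : List L,
    dedup ((none : Option L) :: l.map some) = none :: dedup (l.map some)
  | [] => rfl
  | a :: l => by
    rw [List.map_cons, dedup, if_neg (by simp)]

theorem lsSeq_head (i : Fin m) (r : GRun L m) (n : ℕ) :
    (lsSeq i r n).head? = some ((r 0).2 i) := by
  rw [lsSeq, dedup_head, List.range_succ_eq_map, List.map_cons, List.head?_cons]

theorem locEq_zero_of_lsSeq_eq {i : Fin m} {r r' : GRun L m} {n n' : ℕ}
    (h : lsSeq i r n = lsSeq i r' n') : (r 0).2 i = (r' 0).2 i := by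
  have h2 := congrArg List.head? h
  rw [lsSeq_head, lsSeq_head] at h2
  exact Option.some.inj h2

/-- Prepend a fresh initial global state to a run. -/
def shiftRun (r : GRun L m) : GRun (Option L) m := fun k =>
  match k with
  | 0 => (none, fun _ => none)
  | k + 1 => (some (r k).1, fun i => some ((r k).2 i))

theorem shiftRun_zero_loc (r : GRun L m) (i : Fin m) :
    (shiftRun r 0).2 i = none := rfl

theorem shiftRun_succ_loc (r : GRun L m) (k : ℕ) (i : Fin m) :
    (shiftRun r (k + 1)).2 i = some ((r k).2 i) := rfl

def unshiftRun (d : L) (g : GRun (Option L) m) : GRun L m := fun k =>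
  ((g (k + 1)).1.getD d, fun i => ((g (k + 1)).2 i).getD d)

theorem unshift_shift (d : L) (r : GRun L m) : unshiftRun d (shiftRun r) = r := rfl

theorem lsSeq_shift (i : Fin m) (r : GRun L m) (k : ℕ) :
    lsSeq i (shiftRun r) (k + 1) = none :: (lsSeq i r k).map some := by
  rw [lsSeq, lsSeq, List.range_succ_eq_map, List.map_cons, List.map_map]
  have h1 : ((fun j => (shiftRun r j).2 i) ∘ Nat.succ)
      = some ∘ (fun j => (r j).2 i) := rfl
  rw [h1, ← List.map_map, shiftRun_zero_loc, dedup_none_cons,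
    dedup_map some (fun _ _ h => Option.some.inj h)]

theorem lsSeq_shift_zero (i : Fin m) (r : GRun L m) :
    lsSeq i (shiftRun r) 0 = [(none : Option L)] := by
  rw [lsSeq]
  norm_num [List.range_succ]
  rw [shiftRun_zero_loc]
  rfl

/-- The one-step function implicit in `futureIdx`. -/
noncomputable def fstep (i : Fin m) (r : GRun L m) (t : ℕ) : Option ℕ :=
  if h : ∃ k, t < k ∧ (r k).2 i ≠ (r t).2 i then some (Nat.find h) else none

theorem futureIdx_succ (i : Fin m) (r : GRun L m) (n j : ℕ) :
    futureIdx i r n (j + 1) = (futureIdx i r n j).bind (fstep i r) := by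
  rw [futureIdx]
  unfold fstep
  congr!

theorem futureIdx_one (i : Fin m) (r : GRun L m) (n : ℕ) :
    futureIdx i r n 1 = fstep i r n := by
  rw [show (1 : ℕ) = 0 + 1 from rfl, futureIdx_succ]
  rfl

theorem fstep_eq_some_iff (i : Fin m) (r : GRun L m) (t s : ℕ) :
    fstep i r t = some s ↔
      t < s ∧ (r s).2 i ≠ (r t).2 i ∧ ∀ k, t < k → k < s → (r k).2 i = (r t).2 i := by
  unfold fstep
  by_cases h : ∃ k, t < k ∧ (r k).2 i ≠ (r t).2 i
  · rw [dif_pos h, Option.some_inj, Nat.find_eq_iff]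
    constructor
    · rintro ⟨⟨h1, h2⟩, h3⟩
      exact ⟨h1, h2, fun k hk1 hk2 => by
        by_contra hc; exact h3 k hk2 ⟨hk1, hc⟩⟩
    · rintro ⟨h1, h2, h3⟩
      exact ⟨⟨h1, h2⟩, fun k hk ⟨hk1, hk2⟩ => hk2 (h3 k hk1 hk)⟩
  · rw [dif_neg h]
    constructor
    · intro hc; exact absurd hc (by simp)
    · rintro ⟨h1, h2, _⟩; exact absurd ⟨s, h1, h2⟩ h

theorem fstep_eq_none_iff (i : Fin m) (r : GRun L m) (t : ℕ) :
    fstep i r t = none ↔ ∀ k, t < k → (r k).2 i = (r t).2 i := by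
  unfold fstep
  by_cases h : ∃ k, t < k ∧ (r k).2 i ≠ (r t).2 i
  · rw [dif_pos h]
    simp only [iff_false_intro (Option.some_ne_none _), false_iff]
    intro hc
    obtain ⟨k, hk1, hk2⟩ := h
    exact hk2 (hc k hk1)
  · rw [dif_neg h]
    simp only [true_iff]
    intro k hk
    by_contra hc
    exact h ⟨k, hk, hc⟩

theorem fstep_shift (i : Fin m) (r : GRun L m) (t : ℕ) :
    fstep i (shiftRun r) (t + 1) = (fstep i r t).map (· + 1) := by
  cases h : fstep i r t with
  | none =>
    rw [Option.map_none]
    rw [fstep_eq_none_iff] at h ⊢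
    intro k hk
    obtain ⟨k', rfl⟩ : ∃ k', k = k' + 1 := ⟨k - 1, by omega⟩
    rw [shiftRun_succ_loc, shiftRun_succ_loc, h k' (by omega)]
  | some s =>
    rw [Option.map_some]
    rw [fstep_eq_some_iff] at h
    rw [fstep_eq_some_iff]
    obtain ⟨h1, h2, h3⟩ := h
    refine ⟨by omega, ?_, ?_⟩
    · rw [shiftRun_succ_loc, shiftRun_succ_loc]
      exact fun hc => h2 (Option.some.inj hc)
    · intro k hk1 hk2
      obtain ⟨k', rfl⟩ : ∃ k', k = k' + 1 := ⟨k - 1, by omega⟩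
      rw [shiftRun_succ_loc, shiftRun_succ_loc, h3 k' (by omega) (by omega)]

theorem fstep_shift_zero (i : Fin m) (r : GRun L m) :
    fstep i (shiftRun r) 0 = some 1 := by
  rw [fstep_eq_some_iff]
  exact ⟨Nat.one_pos,
    show (some ((r 0).2 i) : Option L) ≠ none from Option.some_ne_none _,
    fun k hk1 hk2 => by omega⟩

theorem futureIdx_restart (i : Fin m) (r : GRun L m) (n : ℕ) :
    ∀ j, futureIdx i r n (j + 1) = (futureIdx i r n 1).bind fun t => futureIdx i r t j
  | 0 => by
    rw [futureIdx_succ]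
    have h0 : futureIdx i r n 0 = some n := rfl
    rw [h0, Option.bind_some]
    cases h : fstep i r n with
    | none => rfl
    | some t => rfl
  | j + 1 => by
    rw [futureIdx_succ, futureIdx_restart i r n j]
    cases h : futureIdx i r n 1 with
    | none => simp
    | some t =>
      simp only [Option.bind_some]
      rw [futureIdx_succ]

theorem futureIdx_shift (i : Fin m) (r : GRun L m) (n : ℕ) :
    ∀ j, futureIdx i (shiftRun r) (n + 1) j = (futureIdx i r n j).map (· + 1)
  | 0 => rfl
  | j + 1 => by
    rw [futureIdx_succ, futureIdx_succ, futureIdx_shift i r n j]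
    cases futureIdx i r n j with
    | none => rfl
    | some t =>
      simp only [Option.map_some, Option.bind_some]
      exact fstep_shift i r t

theorem futureSeq_shift (i : Fin m) (r : GRun L m) (n j : ℕ) :
    futureSeq i (shiftRun r) (n + 1) j = (futureSeq i r n j).map some := by
  rw [futureSeq, futureSeq, futureIdx_shift]
  cases futureIdx i r n j with
  | none => rfl
  | some t => rfl

theorem futureSeq_shift_zero (i : Fin m) (r : GRun L m) (j : ℕ) :
    futureSeq i (shiftRun r) 0 (j + 1) = (futureSeq i r 0 j).map some := by
  rw [futureSeq, futureIdx_restart, futureIdx_one, fstep_shift_zero, Option.bind_some,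
    show (1 : ℕ) = 0 + 1 from rfl, futureIdx_shift, futureSeq]
  cases futureIdx i r 0 j with
  | none => rfl
  | some t => rfl

theorem futureSeq_shift_zero_zero (i : Fin m) (r : GRun L m) :
    futureSeq i (shiftRun r) 0 0 = some none := rfl

end Aux

/-- The key construction: from a system with no learning and perfect recall
satisfying `ψ`, build one that in addition has a unique initial state
(preserving synchrony). -/
theorem shift_exists (ψ : KL 1) (I : IntSystem 1)
    (hnl : ∀ i, I.NoLearning i) (hpr : ∀ i, I.PerfectRecall i)
    (r : GRun I.L 1) (hr : r ∈ I.runs) (n : ℕ) (hsat : I.sat ψ r n) :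
    ∃ I' : IntSystem 1, (∀ i, I'.NoLearning i) ∧ (∀ i, I'.PerfectRecall i) ∧
      I'.UIS ∧ (I.Sync → I'.Sync) ∧ ∃ r' ∈ I'.runs, ∃ n', I'.sat ψ r' n' := by
  classical
  -- Step 1: restrict to runs with the same initial local state as `r`.
  set R' : Set (GRun I.L 1) := {r' | r' ∈ I.runs ∧ ∀ i, (r' 0).2 i = (r 0).2 i} with hR'
  have hrR' : r ∈ R' := ⟨hr, fun i => rfl⟩
  have hsub : ∀ r' ∈ R', r' ∈ I.runs := fun r' h => h.1
  have hclosed : ∀ r₁ ∈ R', ∀ r₂ ∈ I.runs, ∀ i : Fin 1, ∀ n₁ n₂ : ℕ,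
      locEq i r₁ n₁ r₂ n₂ → r₂ ∈ R' := by
    intro r₁ h₁ r₂ h₂ i n₁ n₂ hle
    refine ⟨h₂, fun i' => ?_⟩
    have hii : i' = i := Subsingleton.elim _ _
    subst hii
    have hls := hpr i' r₁ h₁.1 r₂ h₂ n₁ n₂ hle
    have h0 := locEq_zero_of_lsSeq_eq hls
    rw [← h0]
    exact h₁.2 i'
  let I₁ : IntSystem 1 := ⟨I.L, R', I.val⟩
  have hsat_restr : ∀ φ : KL 1, ∀ r' ∈ R', ∀ k, (I₁.sat φ r' k ↔ I.sat φ r' k) := by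
    intro φ
    induction φ with
    | prim p => intro r' h k; exact Iff.rfl
    | neg φ ih => intro r' h k; exact not_congr (ih r' h k)
    | conj φ χ ih1 ih2 => intro r' h k; exact and_congr (ih1 r' h k) (ih2 r' h k)
    | know i φ ih =>
      intro r' h k
      constructor
      · intro hK r₂ h₂ k₂ hle
        have h₂' : r₂ ∈ R' := hclosed r' h r₂ h₂ i k k₂ hle
        exact (ih r₂ h₂' k₂).1 (hK r₂ h₂' k₂ hle)
      · intro hK r₂ h₂ k₂ hle
        exact (ih r₂ h₂ k₂).2 (hK r₂ (hsub r₂ h₂) k₂ hle)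
    | next φ ih => intro r' h k; exact ih r' h (k + 1)
    | untl φ χ ih1 ih2 =>
      intro r' h k
      constructor
      · rintro ⟨n', h1, h2, h3⟩
        exact ⟨n', h1, (ih2 r' h n').1 h2, fun j hj1 hj2 => (ih1 r' h j).1 (h3 j hj1 hj2)⟩
      · rintro ⟨n', h1, h2, h3⟩
        exact ⟨n', h1, (ih2 r' h n').2 h2, fun j hj1 hj2 => (ih1 r' h j).2 (h3 j hj1 hj2)⟩
  -- Step 2: prepend a fresh initial state.
  let d : I.L := (r 0).1
  let I₂ : IntSystem 1 := ⟨Option I.L, shiftRun '' R',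
    fun g k p => match k with
      | 0 => False
      | Nat.succ j => I.val (unshiftRun d g) j p⟩
  have hsat_shift : ∀ φ : KL 1, ∀ r' ∈ R', ∀ k,
      (I₂.sat φ (shiftRun r') (k + 1) ↔ I₁.sat φ r' k) := by
    intro φ
    induction φ with
    | prim p =>
      intro r' h k
      show I.val (unshiftRun d (shiftRun r')) k p ↔ I.val r' k p
      rw [unshift_shift]
    | neg φ ih => intro r' h k; exact not_congr (ih r' h k)
    | conj φ χ ih1 ih2 => intro r' h k; exact and_congr (ih1 r' h k) (ih2 r' h k)
    | know i φ ih =>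
      intro r' h k
      constructor
      · intro hK r₂ h₂ k₂ hle
        have hle' : locEq i (shiftRun r') (k + 1) (shiftRun r₂) (k₂ + 1) := by
          show (some ((r' k).2 i) : Option I.L) = some ((r₂ k₂).2 i)
          exact congrArg some hle
        exact (ih r₂ h₂ k₂).1 (hK (shiftRun r₂) ⟨r₂, h₂, rfl⟩ (k₂ + 1) hle')
      · intro hK g hg k₂ hle
        obtain ⟨r₂, h₂, rfl⟩ := hg
        cases k₂ with
        | zero =>
          exact absurd hle (show (some ((r' k).2 i) : Option I.L) ≠ none from
            Option.some_ne_none _)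
        | succ k₂' =>
          have hle' : locEq i r' k r₂ k₂' := Option.some.inj hle
          exact (ih r₂ h₂ k₂').2 (hK r₂ h₂ k₂' hle')
    | next φ ih => intro r' h k; exact ih r' h (k + 1)
    | untl φ χ ih1 ih2 =>
      intro r' h k
      constructor
      · rintro ⟨n', h1, h2, h3⟩
        obtain ⟨n'', rfl⟩ : ∃ n'', n' = n'' + 1 := ⟨n' - 1, by omega⟩
        refine ⟨n'', by omega, (ih2 r' h n'').1 h2, fun j hj1 hj2 =>
          (ih1 r' h j).1 (h3 (j + 1) (by omega) (by omega))⟩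
      · rintro ⟨n', h1, h2, h3⟩
        refine ⟨n' + 1, by omega, (ih2 r' h n').2 h2, fun j hj1 hj2 => ?_⟩
        obtain ⟨j', rfl⟩ : ∃ j', j = j' + 1 := ⟨j - 1, by omega⟩
        exact (ih1 r' h j').2 (h3 j' (by omega) (by omega))
  have hUIS : I₂.UIS := by
    rintro g ⟨r₁, _, rfl⟩ g' ⟨r₂, _, rfl⟩
    rfl
  have hPR : ∀ i, I₂.PerfectRecall i := by
    rintro i g ⟨r₁, h₁, rfl⟩ g' ⟨r₂, h₂, rfl⟩ n₁ n₂ hle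
    cases n₁ with
    | zero =>
      cases n₂ with
      | zero => rw [lsSeq_shift_zero, lsSeq_shift_zero]
      | succ n₂' =>
        exact absurd hle.symm (show (some ((r₂ n₂').2 i) : Option I.L) ≠ none from
          Option.some_ne_none _)
    | succ n₁' =>
      cases n₂ with
      | zero =>
        exact absurd hle (show (some ((r₁ n₁').2 i) : Option I.L) ≠ none from
          Option.some_ne_none _)
      | succ n₂' =>
        have hle' : locEq i r₁ n₁' r₂ n₂' := Option.some.inj hle
        rw [lsSeq_shift, lsSeq_shift, hpr i r₁ (hsub _ h₁) r₂ (hsub _ h₂) n₁' n₂' hle']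
  have hNL : ∀ i, I₂.NoLearning i := by
    rintro i g ⟨r₁, h₁, rfl⟩ g' ⟨r₂, h₂, rfl⟩ n₁ n₂ hle j
    cases n₁ with
    | zero =>
      cases n₂ with
      | zero =>
        cases j with
        | zero => rw [futureSeq_shift_zero_zero, futureSeq_shift_zero_zero]
        | succ j' =>
          rw [futureSeq_shift_zero, futureSeq_shift_zero]
          have hle0 : locEq i r₁ 0 r₂ 0 := by
            show (r₁ 0).2 i = (r₂ 0).2 i
            rw [h₁.2 i, h₂.2 i]
          rw [hnl i r₁ h₁.1 r₂ h₂.1 0 0 hle0 j']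
      | succ n₂' =>
        exact absurd hle.symm (show (some ((r₂ n₂').2 i) : Option I.L) ≠ none from
          Option.some_ne_none _)
    | succ n₁' =>
      cases n₂ with
      | zero =>
        exact absurd hle (show (some ((r₁ n₁').2 i) : Option I.L) ≠ none from
          Option.some_ne_none _)
      | succ n₂' =>
        have hle' : locEq i r₁ n₁' r₂ n₂' := Option.some.inj hle
        rw [futureSeq_shift, futureSeq_shift,
          hnl i r₁ (hsub _ h₁) r₂ (hsub _ h₂) n₁' n₂' hle' j]
  have hSync : I.Sync → I₂.Sync := by
    rintro hs i g ⟨r₁, h₁, rfl⟩ g' ⟨r₂, h₂, rfl⟩ n₁ n₂ hle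
    cases n₁ with
    | zero =>
      cases n₂ with
      | zero => rfl
      | succ n₂' =>
        exact absurd hle.symm (show (some ((r₂ n₂').2 i) : Option I.L) ≠ none from
          Option.some_ne_none _)
    | succ n₁' =>
      cases n₂ with
      | zero =>
        exact absurd hle (show (some ((r₁ n₁').2 i) : Option I.L) ≠ none from
          Option.some_ne_none _)
      | succ n₂' =>
        have := hs i r₁ (hsub _ h₁) r₂ (hsub _ h₂) n₁' n₂' (Option.some.inj hle)
        omega
  refine ⟨I₂, hNL, hPR, hUIS, hSync, shiftRun r, ⟨r, hrR', rfl⟩, n + 1, ?_⟩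
  exact (hsat_shift ψ r hrR' n).2 ((hsat_restr ψ r hrR' n).2 hsat)

/-- **Lemma 5.14.** A formula of the single-agent language `KL_1` is satisfiable with
respect to `C_1^{nl,pr}` iff it is satisfiable with respect to `C_1^{nl,pr,uis}`, and it
is satisfiable with respect to `C_1^{nl,pr,sync}` iff it is satisfiable with respect to
`C_1^{nl,pr,sync,uis}`. -/
theorem satisfiable_nl_pr_uis (ψ : KL 1) :
    (satisfiable {I : IntSystem 1 |
        (∀ i, I.NoLearning i) ∧ (∀ i, I.PerfectRecall i)} ψ ↔
      satisfiable {I : IntSystem 1 |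
        (∀ i, I.NoLearning i) ∧ (∀ i, I.PerfectRecall i) ∧ I.UIS} ψ) ∧
    (satisfiable {I : IntSystem 1 |
        (∀ i, I.NoLearning i) ∧ (∀ i, I.PerfectRecall i) ∧ I.Sync} ψ ↔
      satisfiable {I : IntSystem 1 |
        (∀ i, I.NoLearning i) ∧ (∀ i, I.PerfectRecall i) ∧ I.Sync ∧ I.UIS} ψ) := by
  constructor
  · constructor
    · rintro ⟨I, ⟨hnl, hpr⟩, r, hr, n, hs⟩
      obtain ⟨I', h1, h2, h3, _, r', hr', n', hs'⟩ := shift_exists ψ I hnl hpr r hr n hs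
      exact ⟨I', ⟨h1, h2, h3⟩, r', hr', n', hs'⟩
    · rintro ⟨I, ⟨hnl, hpr, _⟩, r, hr, n, hs⟩
      exact ⟨I, ⟨hnl, hpr⟩, r, hr, n, hs⟩
  · constructor
    · rintro ⟨I, ⟨hnl, hpr, hsync⟩, r, hr, n, hs⟩
      obtain ⟨I', h1, h2, h3, h4, r', hr', n', hs'⟩ := shift_exists ψ I hnl hpr r hr n hs
      exact ⟨I', ⟨h1, h2, h4 hsync, h3⟩, r', hr', n', hs'⟩
    · rintro ⟨I, ⟨hnl, hpr, hsync, _⟩, r, hr, n, hs⟩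
      exact ⟨I, ⟨hnl, hpr, hsync⟩, r, hr, n, hs⟩

end HalpernVardiMeyden
end
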